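/- If all consumers in the n-consumer game other than consumer i use a DOE strategy ν of the continuum game, then the maximum expected payoff consumer i can obtain is asymptotically no larger than her optimal oblivious value: for any sequence of history-dependent strategies {κⁿ}, limsup_{n→∞} ( Vⁿ_{i,0}(x₀, s₀ | κⁿ, ν) − Ṽ_{i,0}(x₀, s₀ | ν, ν) ) ≤ 0 for every s₀ ∈ 𝒮 and x₀ ∈ 𝒳₀. -/

import Mathlib

/-!
Dynamic pricing model of Tsitsiklis and Xu, "Pricing of Fluctuations in
Electricity Markets".

* `S` : finite exogenous state space, evolving as a Markov chain with kernel `K`;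
* `X0` : finite set of consumer types, with type distribution `eta s0` given the
  initial exogenous state `s0`;
* actions lie in `[0, B]`, internal states in `[0, Zbd]`, updated by `r`;
* `U t x z s a` : stage utility; `Cc`, `Hc0`, `Hc` : continuum primary and
  ancillary cost functions, with (partial) derivatives `dC`, `dH0`, `dH1`
  (w.r.t. the first demand argument) and `dH2` (w.r.t. the second).
In the `n`-consumer model the costs scale as `Cⁿ(A,s) = n * Cc (A/n) s` etc., so
the `n`-consumer prices are the continuum marginal costs evaluated at the
per-capita demand `A / n`.
-/

noncomputable section

structure ElecModel (S : Type*) (X0 : Type*) [Fintype S] [DecidableEq S] [Fintype X0] where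
  T : ℕ
  B : ℝ
  B_pos : 0 < B
  Zbd : ℝ
  K : S → S → ℝ
  K_nonneg : ∀ s s', 0 ≤ K s s'
  K_sum : ∀ s, ∑ s' : S, K s s' = 1
  eta : S → X0 → ℝ
  eta_nonneg : ∀ s x, 0 ≤ eta s x
  eta_sum : ∀ s, ∑ x : X0, eta s x = 1
  r : X0 → ℝ → ℝ → S → ℝ
  U : ℕ → X0 → ℝ → S → ℝ → ℝ
  Cc : ℝ → S → ℝ
  Hc0 : ℝ → S → ℝ
  Hc : ℝ → ℝ → S → S → ℝ
  dC : ℝ → S → ℝ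
  dH0 : ℝ → S → ℝ
  dH1 : ℝ → ℝ → S → S → ℝ
  dH2 : ℝ → ℝ → S → S → ℝ

namespace ElecModel

variable {S : Type*} {X0 : Type*} [Fintype S] [DecidableEq S] [Fintype X0] [DecidableEq X0]

/-- A dynamic oblivious strategy: the action depends only on the consumer's type and
the history of exogenous states up to the current stage. -/
structure OblStrategy (M : ElecModel S X0) where
  act : ℕ → X0 → (ℕ → S) → ℝ
  act_mem : ∀ t x h, act t x h ∈ Set.Icc (0 : ℝ) M.B
  act_prefix : ∀ t x h h', (∀ τ ≤ t, h τ = h' τ) → act t x h = act t x h'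

/-- A history-dependent strategy: the action depends on the consumer's augmented state
`(previous action, type, internal state)`, the history of exogenous states up to the
current stage, and the empirical distribution (as a multiset) of the other consumers'
augmented states. -/
structure HistStrategy (M : ElecModel S X0) where
  act : ℕ → ℝ × X0 × ℝ → (ℕ → S) → Multiset (ℝ × X0 × ℝ) → ℝ
  act_mem : ∀ t y h f, act t y h f ∈ Set.Icc (0 : ℝ) M.B
  act_prefix : ∀ t y h h' f, (∀ τ ≤ t, h τ = h' τ) → act t y h f = act t y h' f

/-- Probability of the Markov chain of exogenous states following `h` on stages `0,…,T`,
starting from `s0`. -/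
def histProb (M : ElecModel S X0) (s0 : S) (h : ℕ → S) : ℝ :=
  (if h 0 = s0 then (1 : ℝ) else 0) * ∏ t ∈ Finset.range M.T, M.K (h t) (h (t + 1))

def extendHist (M : ElecModel S X0) (g : Fin (M.T + 1) → S) : ℕ → S :=
  fun n => g ⟨min n M.T, Nat.lt_succ_of_le (min_le_right n M.T)⟩

/-- Expectation, over the Markov histories of exogenous states starting at `s0`,
of a function of the history. -/
def expectHist (M : ElecModel S X0) (s0 : S) (F : (ℕ → S) → ℝ) : ℝ :=
  ∑ g : Fin (M.T + 1) → S, M.histProb s0 (M.extendHist g) * F (M.extendHist g)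

/-- The internal state trajectory of a consumer of type `x` along history `h`
under the action sequence `a` : `z 0 = 0`, `z (t+1) = r x (z t) (a t) (h (t+1))`. -/
def zTraj (M : ElecModel S X0) (x : X0) (h : ℕ → S) (a : ℕ → ℝ) : ℕ → ℝ
  | 0 => 0
  | t + 1 => M.zTraj x h a t |> fun z => M.r x z (a t) (h (t + 1))

/-- Average (per-capita) demand in the continuum model under the oblivious strategy `ν`. -/
def avgDemand (M : ElecModel S X0) (ν : OblStrategy M) (s0 : S) (h : ℕ → S) (t : ℕ) : ℝ :=
  ∑ x : X0, M.eta s0 x * ν.act t x h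

/-- Continuum price `p̃_t`. -/
def pTil (M : ElecModel S X0) (ν : OblStrategy M) (s0 : S) (h : ℕ → S) (t : ℕ) : ℝ :=
  M.dC (M.avgDemand ν s0 h t) (h t)

/-- Continuum price `w̃_t`. -/
def wTil (M : ElecModel S X0) (ν : OblStrategy M) (s0 : S) (h : ℕ → S) : ℕ → ℝ
  | 0 => M.dH0 (M.avgDemand ν s0 h 0) (h 0)
  | t + 1 => M.dH2 (M.avgDemand ν s0 h t) (M.avgDemand ν s0 h (t + 1)) (h t) (h (t + 1))

/-- Continuum price `q̃_t` (charged on the previous stage's demand). -/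
def qTil (M : ElecModel S X0) (ν : OblStrategy M) (s0 : S) (h : ℕ → S) : ℕ → ℝ
  | 0 => 0
  | t + 1 => M.dH1 (M.avgDemand ν s0 h t) (M.avgDemand ν s0 h (t + 1)) (h t) (h (t + 1))

/-- Total oblivious stage value along a history: consumer of type `x` follows `νhat`,
prices are induced by `ν`. -/
def oblStageSum (M : ElecModel S X0) (νhat ν : OblStrategy M) (s0 : S) (x : X0)
    (h : ℕ → S) : ℝ :=
  ∑ t ∈ Finset.range (M.T + 1),
    (M.U t x (M.zTraj x h (fun τ => νhat.act τ x h) t) (h t) (νhat.act t x h)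
      - (M.pTil ν s0 h t + M.wTil ν s0 h t) * νhat.act t x h
      - M.qTil ν s0 h t * (if t = 0 then 0 else νhat.act (t - 1) x h))

/-- Oblivious value function `Ṽ_{i,0}(x₀, s₀ ∣ ν̂, ν)`. -/
def oblValue (M : ElecModel S X0) (νhat ν : OblStrategy M) (x0 : X0) (s0 : S) : ℝ :=
  M.expectHist s0 (fun h => M.oblStageSum νhat ν s0 x0 h)

/-- A Dynamic Oblivious Equilibrium. -/
def IsDOE (M : ElecModel S X0) (ν : OblStrategy M) : Prop :=
  ∀ (νhat : OblStrategy M) (x0 : X0) (s0 : S),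
    M.oblValue νhat ν x0 s0 ≤ M.oblValue ν ν x0 s0

/-- The previous action of a consumer following the oblivious strategy `ν` (zero at stage 0). -/
def prevActObl (M : ElecModel S X0) (ν : OblStrategy M) (x : X0) (h : ℕ → S) : ℕ → ℝ
  | 0 => 0
  | t + 1 => ν.act t x h

/-- The empirical distribution (multiset) of the augmented states of the `m` consumers
other than `i`, all following the oblivious strategy `ν`, with type profile `ω`. -/
def othersAug (M : ElecModel S X0) (m : ℕ) (ν : OblStrategy M) (ω : Fin m → X0)
    (h : ℕ → S) (t : ℕ) : Multiset (ℝ × X0 × ℝ) :=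
  (Finset.univ : Finset (Fin m)).val.map
    (fun j => (M.prevActObl ν (ω j) h t, ω j, M.zTraj (ω j) h (fun τ => ν.act τ (ω j) h) t))

/-- Consumer `i`'s trajectory `(action at t, internal state at t)` in the `(m+1)`-consumer
game when she plays the history-dependent strategy `κ` while the `m` other consumers
(with type profile `ω`) play the oblivious strategy `ν`. -/
def iTraj (M : ElecModel S X0) (m : ℕ) (κ : HistStrategy M) (ν : OblStrategy M)
    (x0 : X0) (ω : Fin m → X0) (h : ℕ → S) : ℕ → ℝ × ℝ
  | 0 => (κ.act 0 ((0 : ℝ), x0, (0 : ℝ)) h (M.othersAug m ν ω h 0), 0)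
  | t + 1 =>
      M.iTraj m κ ν x0 ω h t |> fun prev =>
        (M.r x0 prev.2 prev.1 (h (t + 1))) |> fun z' =>
          (κ.act (t + 1) (prev.1, x0, z') h (M.othersAug m ν ω h (t + 1)), z')

/-- Aggregate demand in the `(m+1)`-consumer game. -/
def aggDemandN (M : ElecModel S X0) (m : ℕ) (κ : HistStrategy M) (ν : OblStrategy M)
    (x0 : X0) (ω : Fin m → X0) (h : ℕ → S) (t : ℕ) : ℝ :=
  (M.iTraj m κ ν x0 ω h t).1 + ∑ j : Fin m, ν.act t (ω j) h

/-- `n`-consumer price `p_t = (Cⁿ)'(A_t, s_t) = C̃'(A_t/n, s_t)`, with `n = m+1`. -/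
def pN (M : ElecModel S X0) (m : ℕ) (κ : HistStrategy M) (ν : OblStrategy M)
    (x0 : X0) (ω : Fin m → X0) (h : ℕ → S) (t : ℕ) : ℝ :=
  M.dC (M.aggDemandN m κ ν x0 ω h t / ((m : ℝ) + 1)) (h t)

/-- `n`-consumer price `w_t`, with `n = m+1`. -/
def wN (M : ElecModel S X0) (m : ℕ) (κ : HistStrategy M) (ν : OblStrategy M)
    (x0 : X0) (ω : Fin m → X0) (h : ℕ → S) : ℕ → ℝ
  | 0 => M.dH0 (M.aggDemandN m κ ν x0 ω h 0 / ((m : ℝ) + 1)) (h 0)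
  | t + 1 =>
      M.dH2 (M.aggDemandN m κ ν x0 ω h t / ((m : ℝ) + 1))
        (M.aggDemandN m κ ν x0 ω h (t + 1) / ((m : ℝ) + 1)) (h t) (h (t + 1))

/-- `n`-consumer price `q_t` (charged on the previous stage's demand), with `n = m+1`. -/
def qN (M : ElecModel S X0) (m : ℕ) (κ : HistStrategy M) (ν : OblStrategy M)
    (x0 : X0) (ω : Fin m → X0) (h : ℕ → S) : ℕ → ℝ
  | 0 => 0
  | t + 1 =>
      M.dH1 (M.aggDemandN m κ ν x0 ω h t / ((m : ℝ) + 1))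
        (M.aggDemandN m κ ν x0 ω h (t + 1) / ((m : ℝ) + 1)) (h t) (h (t + 1))

/-- Consumer `i`'s total payoff along the history `h`. -/
def iPayoff (M : ElecModel S X0) (m : ℕ) (κ : HistStrategy M) (ν : OblStrategy M)
    (x0 : X0) (ω : Fin m → X0) (h : ℕ → S) : ℝ :=
  ∑ t ∈ Finset.range (M.T + 1),
    (M.U t x0 (M.iTraj m κ ν x0 ω h t).2 (h t) (M.iTraj m κ ν x0 ω h t).1
      - (M.pN m κ ν x0 ω h t + M.wN m κ ν x0 ω h t) * (M.iTraj m κ ν x0 ω h t).1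
      - M.qN m κ ν x0 ω h t * (if t = 0 then 0 else (M.iTraj m κ ν x0 ω h (t - 1)).1))

/-- Consumer `i`'s expected payoff `Vⁿ_{i,0}(x₀, s₀ ∣ κ, ν)` in the `(m+1)`-consumer game:
the other `m` consumers' types are drawn i.i.d. from `eta s0` and all of them use `ν`. -/
def Vn (M : ElecModel S X0) (m : ℕ) (κ : HistStrategy M) (ν : OblStrategy M)
    (x0 : X0) (s0 : S) : ℝ :=
  ∑ ω : Fin m → X0, (∏ j : Fin m, M.eta s0 (ω j)) *
    M.expectHist s0 (fun h => M.iPayoff m κ ν x0 ω h)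

/-- An oblivious strategy regarded as a history-dependent strategy. -/
def OblStrategy.toHist {M : ElecModel S X0} (ν : OblStrategy M) : HistStrategy M where
  act := fun t y h _ => ν.act t y.2.1 h
  act_mem := fun t y h _ => ν.act_mem t y.2.1 h
  act_prefix := fun t y h h' _ hp => ν.act_prefix t y.2.1 h h' hp

/-- Stage social welfare in the continuum model. -/
def contStageWelfare (M : ElecModel S X0) (ν : OblStrategy M) (s0 : S) (h : ℕ → S)
    (t : ℕ) : ℝ :=
  (∑ x : X0, M.eta s0 x *
      M.U t x (M.zTraj x h (fun τ => ν.act τ x h) t) (h t) (ν.act t x h))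
    - M.Cc (M.avgDemand ν s0 h t) (h t)
    - (if t = 0 then M.Hc0 (M.avgDemand ν s0 h 0) (h 0)
        else M.Hc (M.avgDemand ν s0 h (t - 1)) (M.avgDemand ν s0 h t) (h (t - 1)) (h t))

/-- Expected social welfare `W̃₀(s₀ ∣ ν)` in the continuum model. -/
def contWelfare (M : ElecModel S X0) (ν : OblStrategy M) (s0 : S) : ℝ :=
  M.expectHist s0 (fun h => ∑ t ∈ Finset.range (M.T + 1), M.contStageWelfare ν s0 h t)

/-- Joint trajectory `(action at t, internal state at t)` of the `n` consumers with type
profile `ω` when all of them use the history-dependent strategy `κ`. -/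
def jointTraj (M : ElecModel S X0) (n : ℕ) (κ : HistStrategy M) (ω : Fin n → X0)
    (h : ℕ → S) : ℕ → Fin n → ℝ × ℝ
  | 0 => fun i =>
      (κ.act 0 ((0 : ℝ), ω i, (0 : ℝ)) h
        (((Finset.univ : Finset (Fin n)).erase i).val.map fun j => ((0 : ℝ), ω j, (0 : ℝ))), 0)
  | t + 1 => fun i =>
      M.jointTraj n κ ω h t |> fun prev =>
        (fun j : Fin n => ((prev j).1, ω j, M.r (ω j) (prev j).2 (prev j).1 (h (t + 1))))
          |> fun aug =>
            (κ.act (t + 1) (aug i) h (((Finset.univ : Finset (Fin n)).erase i).val.map aug),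
              M.r (ω i) (prev i).2 (prev i).1 (h (t + 1)))

/-- Aggregate demand in the `n`-consumer game when everyone uses `κ`. -/
def aggDemandAll (M : ElecModel S X0) (n : ℕ) (κ : HistStrategy M) (ω : Fin n → X0)
    (h : ℕ → S) (t : ℕ) : ℝ :=
  ∑ i : Fin n, (M.jointTraj n κ ω h t i).1

/-- Realized total social welfare along the history `h` in the `n`-consumer game under the
symmetric strategy profile `(κ,…,κ)`; the `n`-consumer costs are `n * C̃(A/n)` etc. -/
def welfProfile (M : ElecModel S X0) (n : ℕ) (κ : HistStrategy M) (ω : Fin n → X0)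
    (h : ℕ → S) : ℝ :=
  ∑ t ∈ Finset.range (M.T + 1),
    ((∑ i : Fin n, M.U t (ω i) (M.jointTraj n κ ω h t i).2 (h t) (M.jointTraj n κ ω h t i).1)
      - (n : ℝ) * M.Cc (M.aggDemandAll n κ ω h t / n) (h t)
      - (if t = 0 then (n : ℝ) * M.Hc0 (M.aggDemandAll n κ ω h 0 / n) (h 0)
          else (n : ℝ) * M.Hc (M.aggDemandAll n κ ω h (t - 1) / n)
                 (M.aggDemandAll n κ ω h t / n) (h (t - 1)) (h t)))

/-- Expected social welfare `𝒲ⁿ₀` in the `n`-consumer game under the symmetric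
profile `(κ,…,κ)`, the expectation taken over the i.i.d. consumer types
(equivalently, over the initial population state) and the Markov exogenous states. -/
def expWelfN (M : ElecModel S X0) (n : ℕ) (κ : HistStrategy M) (s0 : S) : ℝ :=
  ∑ ω : Fin n → X0, (∏ i : Fin n, M.eta s0 (ω i)) *
    M.expectHist s0 (fun h => M.welfProfile n κ ω h)

/-- Cumulative utility `Ū_{h_T}(x₀, a₀, …, a_T)` of a type-`x₀` consumer along history `h`
as a function of her action sequence, the internal states being generated by `r`. -/
def cumUtility (M : ElecModel S X0) (x0 : X0) (h : ℕ → S) (a : ℕ → ℝ) : ℝ :=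
  ∑ t ∈ Finset.range (M.T + 1), M.U t x0 (M.zTraj x0 h a t) (h t) (a t)

/-- The initial population state (empirical type distribution) of the type profile `ω`. -/
def popState (n : ℕ) (ω : Fin n → X0) (x : X0) : ℝ :=
  ((Finset.univ.filter fun i => ω i = x).card : ℝ) / n

/-- Assumptions 1–3 of the paper: differentiability of the cost functions, monotone
primary cost, marginal costs bounded by `P` and uniformly equicontinuous on `[0,∞)`,
utilities with values in `[0,Q]` and continuous in the action, internal states
staying in `[0, Zbd]`. -/
structure RegularAssumptions (M : ElecModel S X0) (P Q : ℝ) : Prop where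
  deriv_C : ∀ s : S, ∀ A ∈ Set.Ici (0 : ℝ),
    HasDerivWithinAt (fun u => M.Cc u s) (M.dC A s) (Set.Ici 0) A
  deriv_H0 : ∀ s : S, ∀ A ∈ Set.Ici (0 : ℝ),
    HasDerivWithinAt (fun u => M.Hc0 u s) (M.dH0 A s) (Set.Ici 0) A
  deriv_H1 : ∀ (s s' : S) (A' : ℝ), ∀ A ∈ Set.Ici (0 : ℝ),
    HasDerivWithinAt (fun u => M.Hc u A' s s') (M.dH1 A A' s s') (Set.Ici 0) A
  deriv_H2 : ∀ (s s' : S) (A : ℝ), ∀ A' ∈ Set.Ici (0 : ℝ),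
    HasDerivWithinAt (fun u => M.Hc A u s s') (M.dH2 A A' s s') (Set.Ici 0) A'
  C_mono : ∀ s : S, MonotoneOn (fun u => M.Cc u s) (Set.Ici 0)
  bound_C : ∀ s : S, ∀ A ∈ Set.Ici (0 : ℝ), |M.dC A s| ≤ P
  bound_H0 : ∀ s : S, ∀ A ∈ Set.Ici (0 : ℝ), |M.dH0 A s| ≤ P
  bound_H1 : ∀ (s s' : S), ∀ A' ∈ Set.Icc (0 : ℝ) M.B, ∀ A ∈ Set.Ici (0 : ℝ),
    |M.dH1 A A' s s'| ≤ P
  bound_H2 : ∀ (s s' : S), ∀ A' ∈ Set.Icc (0 : ℝ) M.B, ∀ A ∈ Set.Ici (0 : ℝ),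
    |M.dH2 A' A s s'| ≤ P
  equicont_C : ∀ ε > (0 : ℝ), ∃ δ > (0 : ℝ), ∀ s : S, ∀ A ∈ Set.Ici (0 : ℝ),
    ∀ A2 ∈ Set.Ici (0 : ℝ), |A - A2| ≤ δ → |M.dC A s - M.dC A2 s| ≤ ε
  equicont_H0 : ∀ ε > (0 : ℝ), ∃ δ > (0 : ℝ), ∀ s : S, ∀ A ∈ Set.Ici (0 : ℝ),
    ∀ A2 ∈ Set.Ici (0 : ℝ), |A - A2| ≤ δ → |M.dH0 A s - M.dH0 A2 s| ≤ ε
  equicont_H1 : ∀ ε > (0 : ℝ), ∃ δ > (0 : ℝ), ∀ (s s' : S), ∀ A' ∈ Set.Icc (0 : ℝ) M.B,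
    ∀ A ∈ Set.Ici (0 : ℝ), ∀ A2 ∈ Set.Ici (0 : ℝ),
      |A - A2| ≤ δ → |M.dH1 A A' s s' - M.dH1 A2 A' s s'| ≤ ε
  equicont_H2 : ∀ ε > (0 : ℝ), ∃ δ > (0 : ℝ), ∀ (s s' : S), ∀ A' ∈ Set.Icc (0 : ℝ) M.B,
    ∀ A ∈ Set.Ici (0 : ℝ), ∀ A2 ∈ Set.Ici (0 : ℝ),
      |A - A2| ≤ δ → |M.dH2 A' A s s' - M.dH2 A' A2 s s'| ≤ ε
  U_bounds : ∀ (t : ℕ) (x : X0) (z : ℝ) (s : S) (a : ℝ), M.U t x z s a ∈ Set.Icc (0 : ℝ) Q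
  U_cont : ∀ (t : ℕ) (x : X0) (z : ℝ) (s : S), Continuous fun a => M.U t x z s a
  Zbd_nonneg : 0 ≤ M.Zbd
  r_mem : ∀ (x : X0) (z a : ℝ) (s' : S), z ∈ Set.Icc (0 : ℝ) M.Zbd →
    a ∈ Set.Icc (0 : ℝ) M.B → M.r x z a s' ∈ Set.Icc (0 : ℝ) M.Zbd

/-- Assumption 4 of the paper (convexity): convex costs, concave cumulative utility,
monotone internal-state maps with one-sided derivatives, and utilities with one-sided
derivatives in the internal state. -/
structure ConvexAssumptions (M : ElecModel S X0) : Prop where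
  C_convex : ∀ s : S, ConvexOn ℝ Set.univ (fun A => M.Cc A s)
  H_convex : ∀ s s' : S, ConvexOn ℝ Set.univ (fun p : ℝ × ℝ => M.Hc p.1 p.2 s s')
  cumU_concave : ∀ (x0 : X0) (h : ℕ → S),
    ConcaveOn ℝ {a : ℕ → ℝ | ∀ t, a t ∈ Set.Icc (0 : ℝ) M.B} (fun a => M.cumUtility x0 h a)
  k_monotone : ∀ (x0 : X0) (h : ℕ → S) (t τ : ℕ), τ < t → ∀ a : ℕ → ℝ,
    Monotone (fun u => M.zTraj x0 h (Function.update a τ u) t) ∨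
      Antitone (fun u => M.zTraj x0 h (Function.update a τ u) t)
  k_onesided : ∀ (x0 : X0) (h : ℕ → S) (t τ : ℕ) (a : ℕ → ℝ) (u : ℝ),
    (∃ d, HasDerivWithinAt (fun v => M.zTraj x0 h (Function.update a τ v) t) d (Set.Ici u) u) ∧
    (∃ d, HasDerivWithinAt (fun v => M.zTraj x0 h (Function.update a τ v) t) d (Set.Iic u) u)
  U_z_onesided : ∀ (t : ℕ) (x : X0) (s : S) (a z : ℝ),
    (∃ d, HasDerivWithinAt (fun z' => M.U t x z' s a) d (Set.Ici z) z) ∧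
    (∃ d, HasDerivWithinAt (fun z' => M.U t x z' s a) d (Set.Iic z) z)

end ElecModel

/-!
Fix the types `ω` of the other consumers. Consumer `i`'s actions then depend on the exogenous
history alone, so they form a dynamic oblivious strategy, whose value at the continuum prices
is at most `Ṽ(x₀, s₀ ∣ ν, ν)` because `ν` is a DOE. Her actual payoff exceeds that value by at
most `B` times the gap between the `n`-consumer and the continuum prices. The others' actions
are i.i.d. with mean the continuum demand, so the per-capita demand is within mean-square
distance `O(1/n)` of it, and the marginal costs are uniformly continuous in the demands; by
Chebyshev's inequality the expected price gap, hence the excess payoff, vanishes as `n → ∞`.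
-/

open Set Filter

/-- No lower bound on `u` is needed: when `u` is not eventually bounded below, the real
`limsup` is the junk value `0`. -/
theorem Real.limsup_nonpos_of_forall_eventually_le {β : Type*} {f : Filter β} {u : β → ℝ}
    (h : ∀ ε > 0, ∀ᶠ n in f, u n ≤ ε) : limsup u f ≤ 0 := by
  rw [limsup_eq]
  by_cases hb : BddBelow {a | ∀ᶠ n in f, u n ≤ a}
  · exact le_of_forall_pos_le_add fun ε hε => by simpa using csInf_le hb (h ε hε)
  · rw [Real.sInf_of_not_bddBelow hb]

theorem le_add_mul_sq_add_sq_of_le {x ε K δ d₁ d₂ : ℝ} (hε : 0 ≤ ε) (hK : 0 ≤ K) (hδ : 0 < δ)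
    (hxK : x ≤ K) (hxε : |d₁| ≤ δ → |d₂| ≤ δ → x ≤ ε) :
    x ≤ ε + K / δ ^ 2 * (d₁ ^ 2 + d₂ ^ 2) := by
  by_cases hd : |d₁| ≤ δ ∧ |d₂| ≤ δ
  · have : 0 ≤ K / δ ^ 2 * (d₁ ^ 2 + d₂ ^ 2) := by positivity
    linarith [hxε hd.1 hd.2]
  · have hδd : δ ^ 2 ≤ d₁ ^ 2 + d₂ ^ 2 := by
      rcases not_and_or.1 hd with h | h <;> rw [not_le] at h
      · nlinarith [sq_abs d₁, sq_nonneg d₂]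
      · nlinarith [sq_abs d₂, sq_nonneg d₁]
    have : K ≤ K / δ ^ 2 * (d₁ ^ 2 + d₂ ^ 2) := by
      rw [div_mul_eq_mul_div, le_div_iff₀ (by positivity)]
      exact mul_le_mul_of_nonneg_left hδd hK
    linarith

theorem abs_sub_sub_mul_le_of_abs_deriv_sub_le {F f : ℝ → ℝ} {a b d ε : ℝ} (hab : a ≤ b)
    (hF : ∀ x ∈ Icc a b, HasDerivWithinAt F (f x) (Icc a b) x)
    (hf : ∀ x ∈ Icc a b, |f x - d| ≤ ε) :
    |F b - F a - d * (b - a)| ≤ ε * (b - a) := by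
  have hder : ∀ x ∈ Icc a b, HasDerivWithinAt (fun y => F y - d * y) (f x - d) (Icc a b) x :=
    fun x hx => (hF x hx).sub (by simpa using (hasDerivWithinAt_id x (Icc a b)).const_mul d)
  have := (convex_Icc a b).norm_image_sub_le_of_norm_hasDerivWithin_le hder hf
    (left_mem_Icc.2 hab) (right_mem_Icc.2 hab)
  rw [Real.norm_eq_abs, Real.norm_eq_abs, abs_of_nonneg (sub_nonneg.2 hab)] at this
  calc |F b - F a - d * (b - a)| = |F b - d * b - (F a - d * a)| := by ring_nf
    _ ≤ ε * (b - a) := this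

theorem abs_sub_le_of_hasDerivWithinAt_Ici {F f : ℝ → ℝ} {P x y : ℝ}
    (hF : ∀ z ∈ Ici (0 : ℝ), HasDerivWithinAt F (f z) (Ici 0) z)
    (hf : ∀ z ∈ Ici (0 : ℝ), |f z| ≤ P) (hx : 0 ≤ x) (hy : 0 ≤ y) :
    |F x - F y| ≤ P * |x - y| := by
  simpa [Real.norm_eq_abs] using
    (convex_Ici 0).norm_image_sub_le_of_norm_hasDerivWithin_le hF hf (mem_Ici.2 hy) (mem_Ici.2 hx)

theorem exists_abs_partialDeriv_sub_le {ι : Type*} {F f g : ι → ℝ → ℝ → ℝ} {B P : ℝ}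
    (hB : 0 < B)
    (hf : ∀ i y, ∀ x ∈ Ici (0 : ℝ), HasDerivWithinAt (F i · y) (f i x y) (Ici 0) x)
    (hg : ∀ i x, ∀ y ∈ Ici (0 : ℝ), HasDerivWithinAt (F i x ·) (g i x y) (Ici 0) y)
    (hg_le : ∀ i, ∀ x ∈ Icc 0 B, ∀ y ∈ Ici (0 : ℝ), |g i x y| ≤ P)
    (hf_equicont : ∀ ε > 0, ∃ δ > 0, ∀ i, ∀ y ∈ Icc 0 B, ∀ x ∈ Ici (0 : ℝ), ∀ x' ∈ Ici (0 : ℝ),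
      |x - x'| ≤ δ → |f i x y - f i x' y| ≤ ε) :
    ∀ ε > 0, ∃ δ > 0, ∀ i, ∀ x ∈ Icc 0 B, ∀ y ∈ Icc 0 B, ∀ y' ∈ Icc 0 B,
      |y - y'| ≤ δ → |f i x y - f i x y'| ≤ ε := by
  intro ε hε
  obtain ⟨δ₁, hδ₁, hδ₁f⟩ := hf_equicont (ε / 4) (by positivity)
  set η := min δ₁ B
  have hη : 0 < η := lt_min hδ₁ hB
  refine ⟨ε * η / (4 * |P| + 4), by positivity, fun i x hx y hy y' hy' hyy' => ?_⟩
  have hP : 0 ≤ P := (abs_nonneg _).trans (hg_le i x hx y hy.1)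
  rw [abs_of_nonneg hP] at hyy'
  -- Both `f i x y` and `f i x y'` are within `ε / 4` of the difference quotients of `F` over
  -- `[c, c + η] ∋ x`, and these quotients differ by at most `2 P |y - y'| / η`.
  set c := min x (B - η)
  have hc0 : 0 ≤ c := le_min hx.1 (by linarith [min_le_right δ₁ B])
  have hcx : c ≤ x ∧ x ≤ c + η := ⟨min_le_left _ _, by
    rcases min_cases x (B - η) with h | h <;> linarith [hx.2, h.1]⟩
  have hcB : c + η ≤ B := by linarith [min_le_right x (B - η)]
  have hquot : ∀ z ∈ Icc 0 B, |F i (c + η) z - F i c z - f i x z * η| ≤ ε / 4 * η := by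
    intro z hz
    simpa using abs_sub_sub_mul_le_of_abs_deriv_sub_le (F := (F i · z)) (f := (f i · z))
      (d := f i x z) (by linarith : c ≤ c + η)
      (fun u hu => (hf i z u (hc0.trans hu.1)).mono fun v hv => hc0.trans hv.1)
      (fun u hu => hδ₁f i z hz u (hc0.trans hu.1) x hx.1 <| (abs_sub_le_iff.2
        ⟨by linarith [hu.2], by linarith [hu.1]⟩).trans (min_le_left _ _))
  have hlip : ∀ u ∈ Icc 0 B, |F i u y - F i u y'| ≤ P * (ε * η / (4 * P + 4)) := fun u hu =>
    (abs_sub_le_of_hasDerivWithinAt_Ici (hg i u) (hg_le i u hu) hy.1 hy'.1).trans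
      (mul_le_mul_of_nonneg_left hyy' hP)
  have hPη : P * (ε * η / (4 * P + 4)) ≤ ε * η / 4 := by
    rw [mul_div_assoc', div_le_div_iff₀ (by positivity) (by norm_num)]
    nlinarith [mul_pos hε hη]
  have h1 := hquot y hy
  have h2 := hquot y' hy'
  have h3 := hlip c ⟨hc0, by linarith⟩
  have h4 := hlip (c + η) ⟨by linarith, hcB⟩
  rw [abs_le] at h1 h2 h3 h4 ⊢
  constructor <;> nlinarith

theorem exists_abs_sub_le_of_separately {ι : Type*} {f : ι → ℝ → ℝ → ℝ} {s : Set ℝ}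
    (hx : ∀ ε > 0, ∃ δ > 0, ∀ i, ∀ y ∈ s, ∀ x ∈ s, ∀ x' ∈ s,
      |x - x'| ≤ δ → |f i x y - f i x' y| ≤ ε)
    (hy : ∀ ε > 0, ∃ δ > 0, ∀ i, ∀ x ∈ s, ∀ y ∈ s, ∀ y' ∈ s,
      |y - y'| ≤ δ → |f i x y - f i x y'| ≤ ε) :
    ∀ ε > 0, ∃ δ > 0, ∀ i, ∀ x ∈ s, ∀ x' ∈ s, ∀ y ∈ s, ∀ y' ∈ s,
      |x - x'| ≤ δ → |y - y'| ≤ δ → |f i x y - f i x' y'| ≤ ε := by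
  intro ε hε
  obtain ⟨δ₁, hδ₁, h₁⟩ := hx (ε / 2) (by positivity)
  obtain ⟨δ₂, hδ₂, h₂⟩ := hy (ε / 2) (by positivity)
  refine ⟨min δ₁ δ₂, lt_min hδ₁ hδ₂, fun i x hx x' hx' y hy y' hy' hxx' hyy' => ?_⟩
  calc |f i x y - f i x' y'| ≤ |f i x y - f i x' y| + |f i x' y - f i x' y'| := abs_sub_le _ _ _
    _ ≤ ε / 2 + ε / 2 := add_le_add (h₁ i y hy x hx x' hx' (hxx'.trans (min_le_left _ _)))
        (h₂ i x' hx' y hy y' hy' (hyy'.trans (min_le_right _ _)))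
    _ = ε := add_halves ε

theorem sum_prod_eq_one {X : Type*} [Fintype X] {w : X → ℝ} (hw : ∑ x, w x = 1) (m : ℕ) :
    ∑ ω : Fin m → X, ∏ j, w (ω j) = 1 := by
  rw [← Fintype.prod_sum]
  simp [hw]

/-- The second moment of a sum of `m` i.i.d. centred variables with law `w` is `m` times the
variance. -/
theorem sum_prod_mul_sum_sq {X : Type*} [Fintype X] {w g : X → ℝ} (hw : ∑ x, w x = 1)
    (hg : ∑ x, w x * g x = 0) (m : ℕ) :
    ∑ ω : Fin m → X, (∏ j, w (ω j)) * (∑ j, g (ω j)) ^ 2 = m * ∑ x, w x * g x ^ 2 := by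
  induction m with
  | zero => simp
  | succ m ih =>
    rw [← (Fin.consEquiv fun _ => X).sum_comp, Fintype.sum_prod_type]
    simp only [Fin.consEquiv_apply, Fin.prod_univ_succ, Fin.sum_univ_succ, Fin.cons_zero,
      Fin.cons_succ]
    calc _ = ∑ x, ∑ ω : Fin m → X, (w x * g x ^ 2 * ∏ j, w (ω j)
          + 2 * (w x * g x) * ((∏ j, w (ω j)) * ∑ j, g (ω j))
          + w x * ((∏ j, w (ω j)) * (∑ j, g (ω j)) ^ 2)) :=
          Finset.sum_congr rfl fun x _ => Finset.sum_congr rfl fun ω _ => by ring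
      _ = (∑ x, w x * g x ^ 2) * (∑ ω : Fin m → X, ∏ j, w (ω j))
          + (∑ x, 2 * (w x * g x)) * ∑ ω : Fin m → X, (∏ j, w (ω j)) * ∑ j, g (ω j)
          + (∑ x, w x) * ∑ ω : Fin m → X, (∏ j, w (ω j)) * (∑ j, g (ω j)) ^ 2 := by
          simp only [Finset.sum_add_distrib, Finset.sum_mul_sum]
      _ = _ := by rw [← Finset.mul_sum, sum_prod_eq_one hw, hg, ih, hw]; push_cast; ring

namespace ElecModel

variable {S : Type*} {X0 : Type*} [Fintype S] [DecidableEq S] [Fintype X0]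
  {M : ElecModel S X0} {P Q : ℝ}

theorem RegularAssumptions.P_nonneg (hreg : M.RegularAssumptions P Q) (s : S) : 0 ≤ P :=
  (abs_nonneg _).trans (hreg.bound_C s 0 self_mem_Ici)

section Trajectories

variable (m : ℕ) (κ : HistStrategy M) (ν : OblStrategy M) (x0 : X0) (ω : Fin m → X0)

theorem zTraj_congr (x : X0) {h h' : ℕ → S} {a a' : ℕ → ℝ} :
    ∀ t, (∀ τ ≤ t, h τ = h' τ) → (∀ τ < t, a τ = a' τ) → M.zTraj x h a t = M.zTraj x h' a' t
  | 0, _, _ => rfl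
  | t + 1, hh, ha => by
    change M.r x (M.zTraj x h a t) (a t) (h (t + 1))
      = M.r x (M.zTraj x h' a' t) (a' t) (h' (t + 1))
    rw [zTraj_congr x t (fun τ hτ => hh τ (hτ.trans t.le_succ))
        (fun τ hτ => ha τ (hτ.trans t.lt_succ_self)),
      ha t t.lt_succ_self, hh (t + 1) le_rfl]

theorem prevActObl_congr (x : X0) {h h' : ℕ → S} (t : ℕ) (hh : ∀ τ ≤ t, h τ = h' τ) :
    M.prevActObl ν x h t = M.prevActObl ν x h' t := by
  cases t with
  | zero => rfl
  | succ t => exact ν.act_prefix t x h h' fun τ hτ => hh τ (hτ.trans t.le_succ)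

theorem othersAug_congr {h h' : ℕ → S} (t : ℕ) (hh : ∀ τ ≤ t, h τ = h' τ) :
    M.othersAug m ν ω h t = M.othersAug m ν ω h' t :=
  Multiset.map_congr rfl fun j _ => by
    rw [prevActObl_congr ν (ω j) t hh, zTraj_congr (ω j) t hh fun τ hτ =>
      ν.act_prefix τ (ω j) h h' fun σ hσ => hh σ (hσ.trans hτ.le)]

theorem iTraj_congr {h h' : ℕ → S} :
    ∀ t, (∀ τ ≤ t, h τ = h' τ) → M.iTraj m κ ν x0 ω h t = M.iTraj m κ ν x0 ω h' t
  | 0, hh => by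
    change (κ.act 0 _ h (M.othersAug m ν ω h 0), _) = (κ.act 0 _ h' (M.othersAug m ν ω h' 0), _)
    rw [othersAug_congr m ν ω 0 hh, κ.act_prefix 0 _ h h' _ hh]
  | t + 1, hh => by
    have ih := iTraj_congr t fun τ hτ => hh τ (hτ.trans t.le_succ)
    change (κ.act (t + 1) ((M.iTraj m κ ν x0 ω h t).1, x0,
        M.r x0 (M.iTraj m κ ν x0 ω h t).2 (M.iTraj m κ ν x0 ω h t).1 (h (t + 1))) h
          (M.othersAug m ν ω h (t + 1)),
        M.r x0 (M.iTraj m κ ν x0 ω h t).2 (M.iTraj m κ ν x0 ω h t).1 (h (t + 1))) = _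
    rw [ih, hh (t + 1) le_rfl, othersAug_congr m ν ω (t + 1) hh, κ.act_prefix (t + 1) _ h h' _ hh]
    rfl

theorem iTraj_fst_mem (h : ℕ → S) : ∀ t, (M.iTraj m κ ν x0 ω h t).1 ∈ Icc 0 M.B
  | 0 => κ.act_mem _ _ _ _
  | _ + 1 => κ.act_mem _ _ _ _

theorem iTraj_snd_eq (h : ℕ → S) :
    ∀ t, (M.iTraj m κ ν x0 ω h t).2 = M.zTraj x0 h (fun τ => (M.iTraj m κ ν x0 ω h τ).1) t
  | 0 => rfl
  | t + 1 => by
    change M.r x0 (M.iTraj m κ ν x0 ω h t).2 _ _ = M.r x0 (M.zTraj x0 h _ t) _ _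
    rw [iTraj_snd_eq h t]

variable [DecidableEq X0]

def deviationStrategy : OblStrategy M where
  act t x h := if x = x0 then (M.iTraj m κ ν x0 ω h t).1 else ν.act t x h
  act_mem t x h := by
    split
    · exact iTraj_fst_mem m κ ν x0 ω h t
    · exact ν.act_mem t x h
  act_prefix t x h h' hh := by
    split
    · rw [iTraj_congr m κ ν x0 ω t hh]
    · exact ν.act_prefix t x h h' hh

theorem deviationStrategy_act_self (t : ℕ) (h : ℕ → S) :
    (deviationStrategy m κ ν x0 ω).act t x0 h = (M.iTraj m κ ν x0 ω h t).1 :=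
  if_pos rfl

end Trajectories

section Expectations

theorem histProb_nonneg (s0 : S) (h : ℕ → S) : 0 ≤ M.histProb s0 h :=
  mul_nonneg (by split_ifs <;> norm_num) (Finset.prod_nonneg fun _ _ => M.K_nonneg _ _)

theorem histProb_le_one (s0 : S) (h : ℕ → S) : M.histProb s0 h ≤ 1 := by
  have hK : ∀ s s', M.K s s' ≤ 1 := fun s s' =>
    M.K_sum s ▸ Finset.single_le_sum (fun s'' _ => M.K_nonneg s s'') (Finset.mem_univ s')
  calc M.histProb s0 h ≤ 1 * 1 :=
        mul_le_mul (by split_ifs <;> norm_num)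
          (Finset.prod_le_one (fun _ _ => M.K_nonneg _ _) fun _ _ => hK _ _)
          (Finset.prod_nonneg fun _ _ => M.K_nonneg _ _) zero_le_one
    _ = 1 := one_mul 1

theorem expectHist_mono (s0 : S) {F G : (ℕ → S) → ℝ} (hFG : ∀ h, F h ≤ G h) :
    M.expectHist s0 F ≤ M.expectHist s0 G :=
  Finset.sum_le_sum fun _ _ => mul_le_mul_of_nonneg_left (hFG _) (M.histProb_nonneg s0 _)

theorem expectHist_add (s0 : S) (F G : (ℕ → S) → ℝ) :
    M.expectHist s0 (fun h => F h + G h) = M.expectHist s0 F + M.expectHist s0 G := by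
  simp only [expectHist, mul_add, Finset.sum_add_distrib]

/-- A crude bound, avoiding the fact that the path probabilities sum to one. -/
theorem expectHist_le (s0 : S) {F : (ℕ → S) → ℝ} {c : ℝ} (hF : ∀ h, F h ≤ c) (hc : 0 ≤ c) :
    M.expectHist s0 F ≤ Fintype.card (Fin (M.T + 1) → S) * c := by
  calc M.expectHist s0 F ≤ ∑ _g : Fin (M.T + 1) → S, c :=
        Finset.sum_le_sum fun g _ =>
          (mul_le_mul_of_nonneg_left (hF _) (M.histProb_nonneg s0 _)).trans
            (mul_le_of_le_one_left hc (M.histProb_le_one s0 _))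
    _ = _ := by rw [Finset.sum_const, Finset.card_univ, nsmul_eq_mul]

/-- Expectation over the i.i.d. types of `m` consumers. -/
def typeExpect (M : ElecModel S X0) (s0 : S) (m : ℕ) (F : (Fin m → X0) → ℝ) : ℝ :=
  ∑ ω : Fin m → X0, (∏ j, M.eta s0 (ω j)) * F ω

variable (s0 : S) {m : ℕ}

theorem typeExpect_mono {F G : (Fin m → X0) → ℝ} (hFG : ∀ ω, F ω ≤ G ω) :
    M.typeExpect s0 m F ≤ M.typeExpect s0 m G :=
  Finset.sum_le_sum fun _ _ => mul_le_mul_of_nonneg_left (hFG _)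
    (Finset.prod_nonneg fun _ _ => M.eta_nonneg _ _)

theorem typeExpect_add (F G : (Fin m → X0) → ℝ) :
    M.typeExpect s0 m (fun ω => F ω + G ω) = M.typeExpect s0 m F + M.typeExpect s0 m G := by
  simp only [typeExpect, mul_add, Finset.sum_add_distrib]

theorem typeExpect_const_mul (c : ℝ) (F : (Fin m → X0) → ℝ) :
    M.typeExpect s0 m (fun ω => c * F ω) = c * M.typeExpect s0 m F := by
  simp only [typeExpect, Finset.mul_sum, mul_left_comm]

theorem typeExpect_const (c : ℝ) : M.typeExpect s0 m (fun _ => c) = c := by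
  rw [typeExpect, ← Finset.sum_mul, sum_prod_eq_one (M.eta_sum s0), one_mul]

theorem typeExpect_sum {ι : Type*} (I : Finset ι) (F : (Fin m → X0) → ι → ℝ) :
    M.typeExpect s0 m (fun ω => ∑ i ∈ I, F ω i) = ∑ i ∈ I, M.typeExpect s0 m (F · i) := by
  simp only [typeExpect, Finset.mul_sum]
  exact Finset.sum_comm

theorem typeExpect_expectHist (F : (Fin m → X0) → (ℕ → S) → ℝ) :
    M.typeExpect s0 m (fun ω => M.expectHist s0 (F ω))
      = M.expectHist s0 (fun h => M.typeExpect s0 m (F · h)) := by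
  simp only [typeExpect, expectHist, Finset.mul_sum]
  rw [Finset.sum_comm]
  exact Finset.sum_congr rfl fun _ _ => Finset.sum_congr rfl fun _ _ => mul_left_comm _ _ _

theorem typeExpect_expectHist_sum_le {G : (Fin m → X0) → (ℕ → S) → ℕ → ℝ}
    {γ : ℝ} (hγ : 0 ≤ γ) (hG : ∀ h t, M.typeExpect s0 m (fun ω => G ω h t) ≤ γ) :
    M.typeExpect s0 m (fun ω => M.expectHist s0 fun h =>
        ∑ t ∈ Finset.range (M.T + 1), M.B * G ω h t)
      ≤ Fintype.card (Fin (M.T + 1) → S) * ((M.T + 1) * M.B) * γ := by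
  have hB := M.B_pos.le
  rw [typeExpect_expectHist, mul_assoc]
  refine M.expectHist_le s0 (fun h => ?_) (by positivity)
  rw [typeExpect_sum]
  calc ∑ t ∈ Finset.range (M.T + 1), M.typeExpect s0 m (fun ω => M.B * G ω h t)
      ≤ ∑ _t ∈ Finset.range (M.T + 1), M.B * γ := Finset.sum_le_sum fun t _ => by
        rw [typeExpect_const_mul]
        exact mul_le_mul_of_nonneg_left (hG h t) hB
    _ = _ := by rw [Finset.sum_const, Finset.card_range, nsmul_eq_mul]; push_cast; ring

end Expectations

section Prices

theorem avgDemand_mem (ν : OblStrategy M) (s0 : S) (h : ℕ → S) (t : ℕ) :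
    M.avgDemand ν s0 h t ∈ Icc 0 M.B := by
  refine ⟨Finset.sum_nonneg fun x _ => mul_nonneg (M.eta_nonneg s0 x) (ν.act_mem t x h).1, ?_⟩
  calc M.avgDemand ν s0 h t ≤ ∑ x, M.eta s0 x * M.B :=
        Finset.sum_le_sum fun x _ =>
          mul_le_mul_of_nonneg_left (ν.act_mem t x h).2 (M.eta_nonneg s0 x)
    _ = M.B := by rw [← Finset.sum_mul, M.eta_sum s0, one_mul]

def perCapitaDemand (M : ElecModel S X0) (m : ℕ) (κ : HistStrategy M) (ν : OblStrategy M)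
    (x0 : X0) (ω : Fin m → X0) (h : ℕ → S) (t : ℕ) : ℝ :=
  M.aggDemandN m κ ν x0 ω h t / ((m : ℝ) + 1)

theorem perCapitaDemand_mem (m : ℕ) (κ : HistStrategy M) (ν : OblStrategy M) (x0 : X0)
    (ω : Fin m → X0) (h : ℕ → S) (t : ℕ) : M.perCapitaDemand m κ ν x0 ω h t ∈ Icc 0 M.B := by
  have hm : (0 : ℝ) < m + 1 := by positivity
  have ha := iTraj_fst_mem m κ ν x0 ω h t
  have hsum : ∑ j : Fin m, ν.act t (ω j) h ∈ Icc 0 (m * M.B) := by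
    refine ⟨Finset.sum_nonneg fun j _ => (ν.act_mem t (ω j) h).1, ?_⟩
    simpa using Finset.sum_le_sum fun j (_ : j ∈ Finset.univ) => (ν.act_mem t (ω j) h).2
  rw [perCapitaDemand, aggDemandN, mem_Icc, le_div_iff₀ hm, div_le_iff₀ hm]
  constructor <;> nlinarith [ha.1, ha.2, hsum.1, hsum.2]

/-! The three prices induced by a per-capita demand path `D`; the continuum prices and the
`n`-consumer prices both have this form. -/

def pOf (M : ElecModel S X0) (D : ℕ → ℝ) (h : ℕ → S) (t : ℕ) : ℝ :=
  M.dC (D t) (h t)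

def wOf (M : ElecModel S X0) (D : ℕ → ℝ) (h : ℕ → S) : ℕ → ℝ
  | 0 => M.dH0 (D 0) (h 0)
  | t + 1 => M.dH2 (D t) (D (t + 1)) (h t) (h (t + 1))

def qOf (M : ElecModel S X0) (D : ℕ → ℝ) (h : ℕ → S) : ℕ → ℝ
  | 0 => 0
  | t + 1 => M.dH1 (D t) (D (t + 1)) (h t) (h (t + 1))

section

variable (ν : OblStrategy M) (s0 : S) (h : ℕ → S) (t : ℕ)

theorem wTil_eq_wOf : M.wTil ν s0 h t = M.wOf (M.avgDemand ν s0 h) h t := by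
  cases t <;> rfl

theorem qTil_eq_qOf : M.qTil ν s0 h t = M.qOf (M.avgDemand ν s0 h) h t := by
  cases t <;> rfl

variable (m : ℕ) (κ : HistStrategy M) (x0 : X0) (ω : Fin m → X0)

theorem wN_eq_wOf : M.wN m κ ν x0 ω h t = M.wOf (M.perCapitaDemand m κ ν x0 ω h) h t := by
  cases t <;> rfl

theorem qN_eq_qOf : M.qN m κ ν x0 ω h t = M.qOf (M.perCapitaDemand m κ ν x0 ω h) h t := by
  cases t <;> rfl

end

theorem abs_prices_le (hreg : M.RegularAssumptions P Q) {D : ℕ → ℝ} (hD : ∀ τ, D τ ∈ Icc 0 M.B)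
    (h : ℕ → S) (t : ℕ) : |M.pOf D h t| ≤ P ∧ |M.wOf D h t| ≤ P ∧ |M.qOf D h t| ≤ P := by
  refine ⟨hreg.bound_C _ _ (hD t).1, ?_⟩
  cases t with
  | zero => exact ⟨hreg.bound_H0 _ _ (hD 0).1, by simpa [qOf] using hreg.P_nonneg (h 0)⟩
  | succ t => exact ⟨hreg.bound_H2 _ _ _ (hD t) _ (hD (t + 1)).1,
      hreg.bound_H1 _ _ _ (hD (t + 1)) _ (hD t).1⟩

def priceGap (M : ElecModel S X0) (D D' : ℕ → ℝ) (h : ℕ → S) (t : ℕ) : ℝ :=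
  |M.pOf D h t - M.pOf D' h t| + |M.wOf D h t - M.wOf D' h t| + |M.qOf D h t - M.qOf D' h t|

theorem priceGap_le (hreg : M.RegularAssumptions P Q) {D D' : ℕ → ℝ}
    (hD : ∀ τ, D τ ∈ Icc 0 M.B) (hD' : ∀ τ, D' τ ∈ Icc 0 M.B) (h : ℕ → S) (t : ℕ) :
    M.priceGap D D' h t ≤ 6 * P := by
  obtain ⟨hp, hw, hq⟩ := abs_prices_le hreg hD h t
  obtain ⟨hp', hw', hq'⟩ := abs_prices_le hreg hD' h t
  have := abs_sub (M.pOf D h t) (M.pOf D' h t)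
  have := abs_sub (M.wOf D h t) (M.wOf D' h t)
  have := abs_sub (M.qOf D h t) (M.qOf D' h t)
  rw [priceGap]
  linarith

theorem exists_abs_dH1_sub_le (hreg : M.RegularAssumptions P Q) :
    ∀ ε > 0, ∃ δ > 0, ∀ ss' : S × S, ∀ u ∈ Icc 0 M.B, ∀ v ∈ Icc 0 M.B, ∀ u' ∈ Icc 0 M.B,
      ∀ v' ∈ Icc 0 M.B, |u - v| ≤ δ → |u' - v'| ≤ δ →
        |M.dH1 u u' ss'.1 ss'.2 - M.dH1 v v' ss'.1 ss'.2| ≤ ε := by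
  have hequi : ∀ ε > 0, ∃ δ > 0, ∀ ss' : S × S, ∀ u' ∈ Icc 0 M.B, ∀ u ∈ Ici (0 : ℝ),
      ∀ v ∈ Ici (0 : ℝ), |u - v| ≤ δ → |M.dH1 u u' ss'.1 ss'.2 - M.dH1 v u' ss'.1 ss'.2| ≤ ε :=
    fun ε hε => (hreg.equicont_H1 ε hε).imp fun _ ⟨hδ, h⟩ => ⟨hδ, fun ss' => h ss'.1 ss'.2⟩
  exact exists_abs_sub_le_of_separately
    (fun ε hε => (hequi ε hε).imp fun _ ⟨hδ, h⟩ =>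
      ⟨hδ, fun ss' _ hu' _ hu _ hv => h ss' _ hu' _ hu.1 _ hv.1⟩)
    (exists_abs_partialDeriv_sub_le (F := fun (ss' : S × S) u u' => M.Hc u u' ss'.1 ss'.2)
      (g := fun (ss' : S × S) u u' => M.dH2 u u' ss'.1 ss'.2) M.B_pos
      (fun _ _ _ hu => hreg.deriv_H1 _ _ _ _ hu) (fun _ _ _ hu' => hreg.deriv_H2 _ _ _ _ hu')
      (fun _ _ hu _ hu' => hreg.bound_H2 _ _ _ hu _ hu') hequi)

theorem exists_abs_dH2_sub_le (hreg : M.RegularAssumptions P Q) :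
    ∀ ε > 0, ∃ δ > 0, ∀ ss' : S × S, ∀ u ∈ Icc 0 M.B, ∀ v ∈ Icc 0 M.B, ∀ u' ∈ Icc 0 M.B,
      ∀ v' ∈ Icc 0 M.B, |u - v| ≤ δ → |u' - v'| ≤ δ →
        |M.dH2 u u' ss'.1 ss'.2 - M.dH2 v v' ss'.1 ss'.2| ≤ ε := by
  have hequi : ∀ ε > 0, ∃ δ > 0, ∀ ss' : S × S, ∀ u ∈ Icc 0 M.B, ∀ u' ∈ Ici (0 : ℝ),
      ∀ v' ∈ Ici (0 : ℝ), |u' - v'| ≤ δ → |M.dH2 u u' ss'.1 ss'.2 - M.dH2 u v' ss'.1 ss'.2| ≤ ε :=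
    fun ε hε => (hreg.equicont_H2 ε hε).imp fun _ ⟨hδ, h⟩ => ⟨hδ, fun ss' => h ss'.1 ss'.2⟩
  exact exists_abs_sub_le_of_separately
    (exists_abs_partialDeriv_sub_le (F := fun (ss' : S × S) u' u => M.Hc u u' ss'.1 ss'.2)
      (g := fun (ss' : S × S) u' u => M.dH1 u u' ss'.1 ss'.2) M.B_pos
      (fun _ _ _ hu' => hreg.deriv_H2 _ _ _ _ hu') (fun _ _ _ hu => hreg.deriv_H1 _ _ _ _ hu)
      (fun _ _ hu' _ hu => hreg.bound_H1 _ _ _ hu' _ hu) hequi)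
    (fun ε hε => (hequi ε hε).imp fun _ ⟨hδ, h⟩ =>
      ⟨hδ, fun ss' _ hu _ hu' _ hv' => h ss' _ hu _ hu'.1 _ hv'.1⟩)

theorem exists_priceGap_le (hreg : M.RegularAssumptions P Q) :
    ∀ ε > 0, ∃ δ > 0, ∀ D D' : ℕ → ℝ, (∀ τ, D τ ∈ Icc 0 M.B) → (∀ τ, D' τ ∈ Icc 0 M.B) →
      ∀ h t, |D (t - 1) - D' (t - 1)| ≤ δ → |D t - D' t| ≤ δ → M.priceGap D D' h t ≤ ε := by
  intro ε hε
  obtain ⟨δC, hδC, hC⟩ := hreg.equicont_C (ε / 3) (by positivity)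
  obtain ⟨δ₀, hδ₀, h₀⟩ := hreg.equicont_H0 (ε / 3) (by positivity)
  obtain ⟨δ₁, hδ₁, h₁⟩ := exists_abs_dH1_sub_le hreg (ε / 3) (by positivity)
  obtain ⟨δ₂, hδ₂, h₂⟩ := exists_abs_dH2_sub_le hreg (ε / 3) (by positivity)
  refine ⟨min (min δC δ₀) (min δ₁ δ₂), by positivity, fun D D' hD hD' h t hprev hcur => ?_⟩
  have hle : ∀ {d}, d ≤ min (min δC δ₀) (min δ₁ δ₂) →
      d ≤ δC ∧ d ≤ δ₀ ∧ d ≤ δ₁ ∧ d ≤ δ₂ := fun hd => by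
    simp only [le_min_iff] at hd
    exact ⟨hd.1.1, hd.1.2, hd.2.1, hd.2.2⟩
  have hp := hC (h t) _ (hD t).1 _ (hD' t).1 (hle hcur).1
  cases t with
  | zero =>
    have hw := h₀ (h 0) _ (hD 0).1 _ (hD' 0).1 (hle hcur).2.1
    simp only [priceGap, pOf, wOf, qOf, sub_self, abs_zero] at hp hw ⊢
    linarith
  | succ t =>
    rw [Nat.add_sub_cancel] at hprev
    have hw := h₂ (h t, h (t + 1)) _ (hD t) _ (hD' t) _ (hD (t + 1)) _ (hD' (t + 1))
      (hle hprev).2.2.2 (hle hcur).2.2.2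
    have hq := h₁ (h t, h (t + 1)) _ (hD t) _ (hD' t) _ (hD (t + 1)) _ (hD' (t + 1))
      (hle hprev).2.2.1 (hle hcur).2.2.1
    simp only [priceGap, pOf, wOf, qOf] at hp hw hq ⊢
    linarith

/-- Chebyshev form of the modulus of continuity, suited to taking expectations. -/
theorem exists_priceGap_le_add_sq (hreg : M.RegularAssumptions P Q) :
    ∀ ε > 0, ∃ K ≥ 0, ∀ D D' : ℕ → ℝ, (∀ τ, D τ ∈ Icc 0 M.B) → (∀ τ, D' τ ∈ Icc 0 M.B) →
      ∀ h t, M.priceGap D D' h t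
        ≤ ε + K * ((D (t - 1) - D' (t - 1)) ^ 2 + (D t - D' t) ^ 2) := by
  intro ε hε
  obtain ⟨δ, hδ, hgap⟩ := exists_priceGap_le hreg ε hε
  refine ⟨6 * |P| / δ ^ 2, by positivity, fun D D' hD hD' h t => ?_⟩
  exact le_add_mul_sq_add_sq_of_le hε.le (by positivity) hδ
    ((priceGap_le hreg hD hD' h t).trans (by linarith [le_abs_self P])) (hgap D D' hD hD' h t)

end Prices

section PayoffBounds

variable (m : ℕ) (κ : HistStrategy M) (ν : OblStrategy M) (x0 : X0) (s0 : S)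

/-- The weak law of large numbers, in mean square: consumer `i` contributes at most `B / n` and
the others' i.i.d. actions have variance at most `B ^ 2`. -/
theorem typeExpect_sq_avgDemand_sub_perCapitaDemand_le (h : ℕ → S) (t : ℕ) :
    M.typeExpect s0 m (fun ω => (M.avgDemand ν s0 h t - M.perCapitaDemand m κ ν x0 ω h t) ^ 2)
      ≤ 2 * M.B ^ 2 / (m + 1) := by
  set μ := M.avgDemand ν s0 h t
  set g : X0 → ℝ := fun x => ν.act t x h - μ
  have hμ := avgDemand_mem ν s0 h t
  have hm : (0 : ℝ) < m + 1 := by positivity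
  have hg_mean : ∑ x, M.eta s0 x * g x = 0 := by
    simp only [g, mul_sub, Finset.sum_sub_distrib, ← Finset.sum_mul, M.eta_sum s0, one_mul]
    exact sub_self μ
  have hg_var : ∑ x, M.eta s0 x * g x ^ 2 ≤ M.B ^ 2 := by
    calc ∑ x, M.eta s0 x * g x ^ 2 ≤ ∑ x, M.eta s0 x * M.B ^ 2 :=
          Finset.sum_le_sum fun x _ => mul_le_mul_of_nonneg_left (by
            have := ν.act_mem t x h
            nlinarith [this.1, this.2, hμ.1, hμ.2]) (M.eta_nonneg s0 x)
      _ = M.B ^ 2 := by rw [← Finset.sum_mul, M.eta_sum s0, one_mul]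
  have hpoint : ∀ ω : Fin m → X0, (μ - M.perCapitaDemand m κ ν x0 ω h t) ^ 2
      ≤ 2 * M.B ^ 2 / (m + 1) ^ 2 + 2 / (m + 1) ^ 2 * (∑ j, g (ω j)) ^ 2 := by
    intro ω
    have ha := iTraj_fst_mem m κ ν x0 ω h t
    have hdiff : μ - M.perCapitaDemand m κ ν x0 ω h t
        = -(((M.iTraj m κ ν x0 ω h t).1 - μ) + ∑ j, g (ω j)) / (m + 1) := by
      simp only [perCapitaDemand, aggDemandN, g, Finset.sum_sub_distrib, Finset.sum_const,
        Finset.card_univ, Fintype.card_fin, nsmul_eq_mul]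
      field_simp
      ring
    rw [hdiff, div_pow, neg_sq, div_mul_eq_mul_div, ← add_div,
      div_le_div_iff_of_pos_right (by positivity)]
    nlinarith [ha.1, ha.2, hμ.1, hμ.2,
      sq_nonneg ((M.iTraj m κ ν x0 ω h t).1 - μ - ∑ j, g (ω j))]
  calc _ ≤ M.typeExpect s0 m (fun ω => 2 * M.B ^ 2 / (m + 1) ^ 2
        + 2 / (m + 1) ^ 2 * (∑ j, g (ω j)) ^ 2) := typeExpect_mono s0 hpoint
    _ = 2 * M.B ^ 2 / (m + 1) ^ 2 + 2 / (m + 1) ^ 2 * (m * ∑ x, M.eta s0 x * g x ^ 2) := by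
        rw [typeExpect_add, typeExpect_const, typeExpect_const_mul, typeExpect,
          sum_prod_mul_sum_sq (M.eta_sum s0) hg_mean]
    _ ≤ 2 * M.B ^ 2 / (m + 1) ^ 2 + 2 / (m + 1) ^ 2 * (m * M.B ^ 2) := by gcongr
    _ = 2 * M.B ^ 2 / (m + 1) := by field_simp; ring

theorem iPayoff_le [DecidableEq X0] (ω : Fin m → X0) (h : ℕ → S) :
    M.iPayoff m κ ν x0 ω h ≤ M.oblStageSum (deviationStrategy m κ ν x0 ω) ν s0 x0 h
      + ∑ t ∈ Finset.range (M.T + 1),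
          M.B * M.priceGap (M.avgDemand ν s0 h) (M.perCapitaDemand m κ ν x0 ω h) h t := by
  rw [iPayoff, oblStageSum, ← Finset.sum_add_distrib]
  refine Finset.sum_le_sum fun t _ => ?_
  simp only [deviationStrategy_act_self, ← iTraj_snd_eq, wTil_eq_wOf, qTil_eq_qOf, wN_eq_wOf,
    qN_eq_qOf]
  set D := M.avgDemand ν s0 h
  set D' := M.perCapitaDemand m κ ν x0 ω h
  set a := (M.iTraj m κ ν x0 ω h t).1
  set a' := if t = 0 then 0 else (M.iTraj m κ ν x0 ω h (t - 1)).1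
  have ha := iTraj_fst_mem m κ ν x0 ω h t
  have ha' : a' ∈ Icc 0 M.B := by
    by_cases ht : t = 0
    · simpa [a', ht] using M.B_pos.le
    · simpa [a', ht] using iTraj_fst_mem m κ ν x0 ω h (t - 1)
  have hp : (M.pOf D h t - M.pOf D' h t) * a ≤ |M.pOf D h t - M.pOf D' h t| * M.B :=
    mul_le_mul (le_abs_self _) ha.2 ha.1 (abs_nonneg _)
  have hw : (M.wOf D h t - M.wOf D' h t) * a ≤ |M.wOf D h t - M.wOf D' h t| * M.B :=
    mul_le_mul (le_abs_self _) ha.2 ha.1 (abs_nonneg _)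
  have hq : (M.qOf D h t - M.qOf D' h t) * a' ≤ |M.qOf D h t - M.qOf D' h t| * M.B :=
    mul_le_mul (le_abs_self _) ha'.2 ha'.1 (abs_nonneg _)
  change _ - (M.pOf D' h t + _) * a - _ ≤ _ - (M.pOf D h t + _) * a - _ + _
  rw [priceGap]
  linarith

theorem Vn_le_oblValue_add (hDOE : M.IsDOE ν) :
    M.Vn m κ ν x0 s0 ≤ M.oblValue ν ν x0 s0 + M.typeExpect s0 m fun ω =>
      M.expectHist s0 fun h => ∑ t ∈ Finset.range (M.T + 1),
        M.B * M.priceGap (M.avgDemand ν s0 h) (M.perCapitaDemand m κ ν x0 ω h) h t := by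
  classical
  calc M.Vn m κ ν x0 s0 = M.typeExpect s0 m fun ω => M.expectHist s0 (M.iPayoff m κ ν x0 ω) := rfl
    _ ≤ M.typeExpect s0 m fun ω => M.oblValue ν ν x0 s0 + M.expectHist s0 fun h =>
          ∑ t ∈ Finset.range (M.T + 1),
            M.B * M.priceGap (M.avgDemand ν s0 h) (M.perCapitaDemand m κ ν x0 ω h) h t :=
        typeExpect_mono s0 fun ω => (M.expectHist_mono s0 (iPayoff_le m κ ν x0 s0 ω)).trans <| by
          rw [expectHist_add]
          exact add_le_add_left (hDOE _ x0 s0) _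
    _ = _ := by rw [typeExpect_add, typeExpect_const]

end PayoffBounds

theorem exists_Vn_sub_oblValue_le (hreg : M.RegularAssumptions P Q) {ν : OblStrategy M}
    (hDOE : M.IsDOE ν) (x0 : X0) (s0 : S) :
    ∀ ε > 0, ∃ C, ∀ m κ, M.Vn m κ ν x0 s0 - M.oblValue ν ν x0 s0 ≤ ε + C / (m + 1) := by
  intro ε hε
  set L : ℝ := Fintype.card (Fin (M.T + 1) → S) * ((M.T + 1) * M.B)
  have hL : 0 ≤ L := by have := M.B_pos; positivity
  obtain ⟨K, hK, hgap⟩ := exists_priceGap_le_add_sq hreg (ε / (L + 1)) (by positivity)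
  refine ⟨L * (4 * K * M.B ^ 2), fun m κ => ?_⟩
  have hm : (0 : ℝ) < m + 1 := by positivity
  have hEgap : ∀ h t, M.typeExpect s0 m
      (fun ω => M.priceGap (M.avgDemand ν s0 h) (M.perCapitaDemand m κ ν x0 ω h) h t)
        ≤ ε / (L + 1) + 4 * K * M.B ^ 2 / (m + 1) := fun h t => by
    calc _ ≤ M.typeExpect s0 m (fun ω => ε / (L + 1) + K *
          ((M.avgDemand ν s0 h (t - 1) - M.perCapitaDemand m κ ν x0 ω h (t - 1)) ^ 2
            + (M.avgDemand ν s0 h t - M.perCapitaDemand m κ ν x0 ω h t) ^ 2)) :=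
          typeExpect_mono s0 fun ω => hgap _ _ (avgDemand_mem ν s0 h)
            (perCapitaDemand_mem m κ ν x0 ω h) h t
      _ ≤ ε / (L + 1) + K * (2 * M.B ^ 2 / (m + 1) + 2 * M.B ^ 2 / (m + 1)) := by
          rw [typeExpect_add, typeExpect_const, typeExpect_const_mul, typeExpect_add]
          gcongr
          · exact typeExpect_sq_avgDemand_sub_perCapitaDemand_le m κ ν x0 s0 h (t - 1)
          · exact typeExpect_sq_avgDemand_sub_perCapitaDemand_le m κ ν x0 s0 h t
      _ = _ := by ring
  have hγ : 0 ≤ ε / (L + 1) + 4 * K * M.B ^ 2 / (m + 1) := by positivity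
  calc M.Vn m κ ν x0 s0 - M.oblValue ν ν x0 s0
      ≤ L * (ε / (L + 1) + 4 * K * M.B ^ 2 / (m + 1)) := by
        linarith [Vn_le_oblValue_add m κ ν x0 s0 hDOE, typeExpect_expectHist_sum_le s0 hγ hEgap]
    _ ≤ ε + L * (4 * K * M.B ^ 2) / (m + 1) := by
        have hLε : L * (ε / (L + 1)) ≤ ε := by
          rw [mul_div_assoc', div_le_iff₀ (by positivity)]
          linarith
        linarith [mul_div_assoc L (4 * K * M.B ^ 2) (m + 1)]

end ElecModel

open ElecModel in
theorem n_consumer_payoff_asymptotically_below_oblivious_value_general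
    {S : Type*} {X0 : Type*} [Fintype S] [DecidableEq S] [Fintype X0]
    (M : ElecModel S X0) (P Q : ℝ)
    (hreg : RegularAssumptions M P Q)
    (ν : OblStrategy M) (hDOE : M.IsDOE ν) :
    ∀ (s0 : S) (x0 : X0) (κ : ℕ → HistStrategy M),
      Filter.limsup
        (fun n : ℕ => M.Vn (n - 1) (κ n) ν x0 s0 - M.oblValue ν ν x0 s0)
        Filter.atTop ≤ 0 := by
  intro s0 x0 κ
  refine Real.limsup_nonpos_of_forall_eventually_le fun ε hε => ?_
  obtain ⟨C, hC⟩ := exists_Vn_sub_oblValue_le hreg hDOE x0 s0 (ε / 2) (half_pos hε)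
  have hsmall : ∀ᶠ n : ℕ in atTop, C / n ≤ ε / 2 :=
    (tendsto_const_div_atTop_nhds_zero_nat C).eventually (ge_mem_nhds (half_pos hε))
  filter_upwards [hsmall, eventually_ge_atTop 1] with n hn hn1
  have := hC (n - 1) (κ n)
  rw [Nat.cast_sub hn1, Nat.cast_one, sub_add_cancel] at this
  linarith

open ElecModel in
/-- Step 3 of the proof of Theorem 1. If all consumers other than `i`
in the `n`-consumer game use a DOE strategy `ν` of the continuum game, then the maximum
expected payoff consumer `i` can obtain is asymptotically no larger than her optimal
oblivious value: for any sequence of history-dependent strategies `κ n`,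
`limsup_{n→∞} (Vⁿ(x0, s0 ∣ κ n, ν) - Ṽ(x0, s0 ∣ ν, ν)) ≤ 0`. -/
theorem n_consumer_payoff_asymptotically_below_oblivious_value
    {S : Type*} {X0 : Type*} [Fintype S] [DecidableEq S] [Fintype X0] [DecidableEq X0]
    (M : ElecModel S X0) (P Q : ℝ)
    (hreg : RegularAssumptions M P Q)
    (ν : OblStrategy M) (hDOE : M.IsDOE ν) :
    ∀ (s0 : S) (x0 : X0) (κ : ℕ → HistStrategy M),
      Filter.limsup
        (fun n : ℕ => M.Vn (n - 1) (κ n) ν x0 s0 - M.oblValue ν ν x0 s0)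
        Filter.atTop ≤ 0 :=
  n_consumer_payoff_asymptotically_below_oblivious_value_general M P Q hreg ν hDOE
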